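/- Substitution lemma (SUBASEQ): if φ[y/x] is admissible (no free occurrence of x in φ lies in the scope of an assignment operator binding y), then for any model M, world w, and assignment σ, M,w,σ ⊨ φ[y/x] if and only if M,w,σ ⊨ [x:=y]φ. -/
import Mathlib


inductive Term (V N : Type) where
  | var : V → Term V N
  | name : N → Term V N

inductive Form (V N P I : Type) where
  | eq : Term V N → Term V N → Form V N P I
  | pred : P → List (Term V N) → Form V N P I
  | neg : Form V N P I → Form V N P I
  | and : Form V N P I → Form V N P I → Form V N P I
  | K : I → Form V N P I → Form V N P I
  | assign : V → Term V N → Form V N P I → Form V N P I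

structure Model (W D N P I : Type) where
  R : I → W → W → Prop
  ρ : P → W → List D → Prop
  η : N → W → D

variable {V N P I W D : Type}

def tval (M : Model W D N P I) (σ : V → D) (w : W) : Term V N → D
  | .var x => σ x
  | .name a => M.η a w

def Sat [DecidableEq V] (M : Model W D N P I) (w : W) (σ : V → D) :
    Form V N P I → Prop
  | .eq t t' => tval M σ w t = tval M σ w t'
  | .pred p ts => M.ρ p w (ts.map (tval M σ w))
  | .neg φ => ¬ Sat M w σ φ
  | .and φ ψ => Sat M w σ φ ∧ Sat M w σ ψ
  | .K i φ => ∀ v, M.R i w v → Sat M v σ φ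
  | .assign x t φ => Sat M w (Function.update σ x (tval M σ w t)) φ

def Kv (x : V) (i : I) (a : N) : Form V N P I :=
  .assign x (.name a) (.K i (.eq (.var x) (.name a)))

variable {V N P I W D : Type}

/-- Variables occurring in a term. -/
def Term.vars : Term V N → Set V
  | .var x => {x}
  | .name _ => ∅

/-- Free variables of a formula; [x:=t] binds x in its scope. -/
def Form.Fv : Form V N P I → Set V
  | .eq t t' => t.vars ∪ t'.vars
  | .pred _ ts => ⋃ t ∈ ts, Term.vars t
  | .neg φ => φ.Fv
  | .and φ ψ => φ.Fv ∪ ψ.Fv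
  | .K _ φ => φ.Fv
  | .assign x t φ => (φ.Fv \ {x}) ∪ t.vars

/-- All variables occurring in a formula (free, bound, or as a binder). -/
def Form.vars : Form V N P I → Set V
  | .eq t t' => t.vars ∪ t'.vars
  | .pred _ ts => ⋃ t ∈ ts, Term.vars t
  | .neg φ => φ.vars
  | .and φ ψ => φ.vars ∪ ψ.vars
  | .K _ φ => φ.vars
  | .assign x t φ => {x} ∪ t.vars ∪ φ.vars

/-- Substitute variable y for variable x in a term. -/
def Term.substV [DecidableEq V] (y x : V) : Term V N → Term V N
  | .var z => if z = x then .var y else .var z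
  | .name a => .name a

/-- φ[y/x]: substitute y for all free occurrences of x in φ. -/
def Form.substV [DecidableEq V] (y x : V) : Form V N P I → Form V N P I
  | .eq t t' => .eq (t.substV y x) (t'.substV y x)
  | .pred p ts => .pred p (ts.map (Term.substV y x))
  | .neg φ => .neg (φ.substV y x)
  | .and φ ψ => .and (φ.substV y x) (ψ.substV y x)
  | .K i φ => .K i (φ.substV y x)
  | .assign z t φ =>
      .assign z (t.substV y x) (if z = x then φ else φ.substV y x)

/-- φ[y/x] is admissible: no free occurrence of x in φ lies within the scope
of an assignment operator binding y. -/
def Form.admissible [DecidableEq V] (y x : V) : Form V N P I → Prop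
  | .eq _ _ => True
  | .pred _ _ => True
  | .neg φ => φ.admissible y x
  | .and φ ψ => φ.admissible y x ∧ ψ.admissible y x
  | .K _ φ => φ.admissible y x
  | .assign z _ φ =>
      if z = x then True
      else (z = y → x ∉ φ.Fv) ∧ φ.admissible y x

lemma tval_agree [DecidableEq V] (M : Model W D N P I) (w : W)
    (σ₁ σ₂ : V → D) (t : Term V N) (h : ∀ v ∈ t.vars, σ₁ v = σ₂ v) :
    tval M σ₁ w t = tval M σ₂ w t := by
  cases t with
  | var z => exact h z (by simp [Term.vars])
  | name a => rfl

lemma sat_agree [DecidableEq V] (M : Model W D N P I) (φ : Form V N P I) :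
    ∀ (w : W) (σ₁ σ₂ : V → D), (∀ v ∈ φ.Fv, σ₁ v = σ₂ v) →
    (Sat M w σ₁ φ ↔ Sat M w σ₂ φ) := by
  induction φ with
  | eq t t' =>
      intro w σ₁ σ₂ h
      simp only [Sat]
      rw [tval_agree M w σ₁ σ₂ t (fun v hv => h v (Or.inl hv)),
          tval_agree M w σ₁ σ₂ t' (fun v hv => h v (Or.inr hv))]
  | pred p ts =>
      intro w σ₁ σ₂ h
      simp only [Sat]
      have : ts.map (tval M σ₁ w) = ts.map (tval M σ₂ w) := by
        apply List.map_congr_left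
        intro t ht
        exact tval_agree M w σ₁ σ₂ t (fun v hv => h v (by
          simp [Form.Fv]; exact ⟨t, ht, hv⟩))
      rw [this]
  | neg φ ih =>
      intro w σ₁ σ₂ h
      simp only [Sat]
      rw [ih w σ₁ σ₂ h]
  | and φ ψ ihφ ihψ =>
      intro w σ₁ σ₂ h
      simp only [Sat]
      rw [ihφ w σ₁ σ₂ (fun v hv => h v (Or.inl hv)),
          ihψ w σ₁ σ₂ (fun v hv => h v (Or.inr hv))]
  | K i φ ih =>
      intro w σ₁ σ₂ h
      simp only [Sat]
      exact forall_congr' fun v => imp_congr_right fun _ => ih v σ₁ σ₂ h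
  | assign z t φ ih =>
      intro w σ₁ σ₂ h
      simp only [Sat]
      have ht : tval M σ₁ w t = tval M σ₂ w t :=
        tval_agree M w σ₁ σ₂ t (fun v hv => h v (Or.inr hv))
      rw [ht]
      apply ih
      intro v hv
      by_cases hvz : v = z
      · subst hvz; simp [Function.update]
      · simp [Function.update, hvz]
        exact h v (Or.inl ⟨hv, hvz⟩)

lemma tval_subst [DecidableEq V] (M : Model W D N P I) (w : W)
    (σ : V → D) (x y : V) (t : Term V N) :
    tval M σ w (t.substV y x) = tval M (Function.update σ x (σ y)) w t := by
  cases t with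
  | var z =>
      by_cases hz : z = x
      · subst hz; simp [Term.substV, tval, Function.update]
      · simp [Term.substV, tval, Function.update, hz]
  | name a => rfl

lemma subaseq_aux [DecidableEq V] (M : Model W D N P I) (x y : V)
    (φ : Form V N P I) :
    ∀ (w : W) (σ : V → D), φ.admissible y x →
    (Sat M w σ (φ.substV y x) ↔ Sat M w (Function.update σ x (σ y)) φ) := by
  induction φ with
  | eq t t' =>
      intro w σ _
      simp only [Form.substV, Sat, tval_subst]
  | pred p ts =>
      intro w σ _
      simp only [Form.substV, Sat, List.map_map]
      have : (tval M σ w ∘ Term.substV y x) = tval M (Function.update σ x (σ y)) w := by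
        funext t; exact tval_subst M w σ x y t
      rw [this]
  | neg φ ih =>
      intro w σ h
      simp only [Form.substV, Sat]
      rw [ih w σ h]
  | and φ ψ ihφ ihψ =>
      intro w σ h
      simp only [Form.substV, Sat]
      rw [ihφ w σ h.1, ihψ w σ h.2]
  | K i φ ih =>
      intro w σ h
      simp only [Form.substV, Sat]
      exact forall_congr' fun v => imp_congr_right fun _ => ih v σ h
  | assign z t φ ih =>
      intro w σ h
      by_cases hz : z = x
      · subst hz
        simp only [Form.substV, if_pos rfl, Sat, tval_subst]
        have : Function.update σ z (tval M (Function.update σ z (σ y)) w t)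
            = Function.update (Function.update σ z (σ y)) z
                (tval M (Function.update σ z (σ y)) w t) := by
          simp [Function.update_idem]
        rw [this]; simp
      · have h' : (z = y → x ∉ φ.Fv) ∧ φ.admissible y x := by
          simpa [Form.admissible, hz] using h
        simp only [Form.substV, if_neg hz, Sat, tval_subst]
        set d := tval M (Function.update σ x (σ y)) w t with hd
        rw [ih w (Function.update σ z d) h'.2]
        apply sat_agree
        intro v hv
        by_cases hvx : v = x
        · subst hvx
          simp [Function.update, hz, Ne.symm hz]
          by_cases hzy : z = y
          · exact absurd hv (h'.1 hzy)
          · simp [Ne.symm hzy]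
        · by_cases hvz : v = z
          · subst hvz; simp [Function.update, hz, hvx]
          · simp [Function.update, hvx, hvz]

/-- Substitution lemma (SUBASEQ): if φ[y/x] is admissible, then
φ[y/x] ↔ [x:=y]φ. -/
theorem subaseq_valid [DecidableEq V] (M : Model W D N P I) (w : W)
    (σ : V → D) (x y : V) (φ : Form V N P I) (hadm : φ.admissible y x) :
    Sat M w σ (φ.substV y x) ↔ Sat M w σ (.assign x (.var y) φ) := by
  simpa [Sat, tval] using subaseq_aux M x y φ w σ hadm
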